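/- Let X be a finite connected multigraph with minimum degree 2. Then for all vertices x, y, the Cesàro averages (1/n)∑_{k=1}^{n} q^(k)(x,y) of the vertex non-backtracking random walk transition probabilities converge to deg(y)/|E(X)|, where |E(X)| is the number of oriented edges (twice the number of undirected edges). -/

import Mathlib

open scoped BigOperators
open Filter

/-- A multigraph given by its set of *oriented* edges. Each oriented edge `e`
has an initial vertex `tail e = e⁻`, a terminal vertex `head e = e⁺`, and a
reversal `bar e = ě` with `ě ≠ e` (loops are counted twice). Local finiteness
is built in. -/
structure Multigraph where
  V : Type
  E : Type
  tail : E → V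
  head : E → V
  bar : E → E
  bar_bar : ∀ e, bar (bar e) = e
  bar_ne : ∀ e, bar e ≠ e
  head_bar : ∀ e, head (bar e) = tail e
  locFin : ∀ x, {e | tail e = x}.Finite

namespace Multigraph
variable (G : Multigraph)

/-- The degree of a vertex: the number of oriented edges emanating from it. -/
noncomputable def deg (x : G.V) : ℕ := (G.locFin x).toFinset.card

/-- `e → f`: `f` may follow `e` in a non-backtracking walk. -/
def Step (e f : G.E) : Prop := G.tail f = G.head e ∧ f ≠ G.bar e

/-- `e ⇒ f`: there is a non-backtracking walk from `e` to `f`. -/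
def Reach : G.E → G.E → Prop := Relation.ReflTransGen G.Step

/-- One-step transition probabilities of the edge non-backtracking random walk. -/
noncomputable def q (e f : G.E) : ℝ :=
  open Classical in
  if G.Step e f then 1 / ((G.deg (G.head e) : ℝ) - 1) else 0

/-- `n`-step transition probabilities `q_E^(n)` of the edge NBRW. -/
noncomputable def qn (G : Multigraph) : ℕ → G.E → G.E → ℝ
  | 0, e, f => open Classical in if e = f then 1 else 0
  | n + 1, e, f => ∑' g : G.E, qn G n e g * G.q g f

/-- Vertex NBRW transition probabilities:
`q^(n)(x,y) = (1/deg x) ∑_{e⁺=x, f⁺=y} q_E^(n)(e,f)`. -/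
noncomputable def qv (n : ℕ) (x y : G.V) : ℝ :=
  (1 / (G.deg x : ℝ)) *
    ∑' (e : {e : G.E // G.head e = x}) (f : {f : G.E // G.head f = y}),
      G.qn n e.1 f.1

def Adj (x y : G.V) : Prop := ∃ e : G.E, G.tail e = x ∧ G.head e = y

def Connected : Prop := ∀ x y : G.V, Relation.ReflTransGen G.Adj x y

/-- There is a walk of length `n` from `x` to `y`. -/
def WalkLen (G : Multigraph) : ℕ → G.V → G.V → Prop
  | 0, x, y => x = y
  | n + 1, x, y => ∃ z, G.Adj x z ∧ WalkLen G n z y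

/-- Graph distance. -/
noncomputable def dist (x y : G.V) : ℕ := sInf {n | G.WalkLen n x y}

/-- A cycle: a nonempty list of distinct oriented edges, with distinct initial
vertices, such that consecutive edges (cyclically) form non-backtracking steps. -/
def IsCycle (l : List G.E) : Prop :=
  l ≠ [] ∧ l.Nodup ∧ (l.map G.tail).Nodup ∧ List.Chain' G.Step (l ++ l.take 1)

/-- Small cycles are dense: some radius `R` works for every ball. -/
def SmallCyclesDense : Prop :=
  ∃ R : ℕ, ∀ x : G.V, ∃ l : List G.E, G.IsCycle l ∧ ∀ e ∈ l, G.dist x (G.tail e) ≤ R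

/-- `X` is a (finite) cycle graph. -/
def IsCycleGraph : Prop := (Set.univ : Set G.V).Finite ∧ ∀ x, G.deg x = 2

def Bipartite : Prop := ∃ c : G.V → Bool, ∀ e : G.E, c (G.tail e) ≠ c (G.head e)

end Multigraph

/-!
The edge transition matrix `Q` is doubly stochastic, hence a contraction of `ℓ²(E)`, and von
Neumann's mean ergodic theorem makes the Cesàro averages of `Qᵏ` converge to the orthogonal
projection `P` onto the fixed vectors of `Q`. A vector fixed by a contraction is also fixed by its
adjoint, so a fixed vector `u` satisfies both the row and the column equations of `Q`. Comparing
them at an edge `e` and at its reversal `ē` gives `(∑_{f⁺ = e⁺} u f) / deg e⁺ = (u e + u ē) / 2`,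
a quantity symmetric in `e` and `ē`; by connectivity `∑_{f⁺ = x} u f` is therefore proportional
to `deg x`, i.e. equal to `deg x · (∑ u) / |E|`. For `u = P 𝟙_{f⁺ = y}` the total mass is
`⟪P 𝟙, 𝟙_{f⁺ = y}⟫ = deg y`, because the constant vector is fixed.
-/

open Finset Topology

namespace ContinuousLinearMap

variable {𝕜 E : Type*} [RCLike 𝕜] [NormedAddCommGroup E] [InnerProductSpace 𝕜 E] [CompleteSpace E]

theorem adjoint_apply_eq_self_of_apply_eq_self {T : E →L[𝕜] E} (hT : ‖T‖ ≤ 1) {u : E}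
    (hu : T u = u) : adjoint T u = u := by
  refine eq_of_norm_le_re_inner_eq_norm_sq (𝕜 := 𝕜) ?_ ?_
  · calc ‖adjoint T u‖ ≤ ‖adjoint T‖ * ‖u‖ := le_opNorm _ _
      _ ≤ ‖u‖ := by
        rw [LinearIsometryEquiv.norm_map]
        exact mul_le_of_le_one_left (norm_nonneg _) hT
  · rw [adjoint_inner_left, hu, inner_self_eq_norm_sq]

theorem tendsto_cesaro_pow_starProjection (T : E →L[𝕜] E) (hT : ‖T‖ ≤ 1) (v : E) :
    Tendsto (fun n : ℕ => (n : 𝕜)⁻¹ • ∑ k ∈ Icc 1 n, (T ^ k) v) atTop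
      (𝓝 ((T.eqLocus (1 : E →L[𝕜] E)).starProjection v)) := by
  set K := T.eqLocus (1 : E →L[𝕜] E)
  have hfix : T (K.starProjection v) = K.starProjection v :=
    LinearMap.mem_eqLocus.mp (K.starProjection_apply_mem v)
  -- applying `T` shifts the Birkhoff sum over `0, …, n - 1` to the sum over `1, …, n`
  have h := (T.continuous.tendsto _).comp (T.tendsto_birkhoffAverage_orthogonalProjection hT v)
  rw [← K.starProjection_apply, hfix] at h
  refine h.congr fun n => ?_
  simp only [Function.comp_apply, birkhoffAverage, birkhoffSum, map_smul, map_sum, id_eq]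
  rw [← Ico_add_one_right_eq_Icc, sum_Ico_eq_sum_range, Nat.add_sub_cancel]
  simp only [add_comm 1, pow_apply_eq_iterate, Function.iterate_succ_apply']

end ContinuousLinearMap

namespace Multigraph

variable {G : Multigraph}

theorem tail_bar (e : G.E) : G.tail (G.bar e) = G.head e := by
  rw [← G.head_bar, G.bar_bar]

theorem eq_bar_comm {e f : G.E} : f = G.bar e ↔ e = G.bar f :=
  ⟨fun h => h ▸ (G.bar_bar e).symm, fun h => h ▸ (G.bar_bar f).symm⟩

theorem Connected.eq_of_adj {α : Type*} (hG : G.Connected) {φ : G.V → α}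
    (hφ : ∀ x y, G.Adj x y → φ x = φ y) (x y : G.V) : φ x = φ y := by
  induction hG x y with
  | refl => rfl
  | tail _ hadj ih => exact ih.trans (hφ _ _ hadj)

theorem deg_sub_one_pos (hdeg : ∀ x, 2 ≤ G.deg x) (x : G.V) : 0 < (G.deg x : ℝ) - 1 := by
  have : (2 : ℝ) ≤ G.deg x := by exact_mod_cast hdeg x
  linarith

theorem deg_ne_zero (hdeg : ∀ x, 2 ≤ G.deg x) (x : G.V) : (G.deg x : ℝ) ≠ 0 := by
  linarith [deg_sub_one_pos hdeg x]

section Finite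

open scoped Classical Matrix RealInnerProductSpace

variable [Fintype G.E]

variable (G) in
noncomputable def inEdges (x : G.V) : Finset G.E := {e | G.head e = x}

variable (G) in
noncomputable def outEdges (x : G.V) : Finset G.E := {e | G.tail e = x}

@[simp]
theorem mem_inEdges {x : G.V} {e : G.E} : e ∈ G.inEdges x ↔ G.head e = x := by
  simp [inEdges]

@[simp]
theorem mem_outEdges {x : G.V} {e : G.E} : e ∈ G.outEdges x ↔ G.tail e = x := by
  simp [outEdges]

theorem card_outEdges (x : G.V) : #(G.outEdges x) = G.deg x := by
  rw [deg]
  congr 1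
  ext e
  simp

theorem sum_inEdges_bar {M : Type*} [AddCommMonoid M] (u : G.E → M) (x : G.V) :
    ∑ e ∈ G.inEdges x, u (G.bar e) = ∑ e ∈ G.outEdges x, u e :=
  sum_nbij' G.bar G.bar (by simp [tail_bar]) (by simp [head_bar]) (fun e _ => G.bar_bar e)
    (fun e _ => G.bar_bar e) fun _ _ => rfl

theorem card_inEdges (x : G.V) : #(G.inEdges x) = G.deg x := by
  rw [← card_outEdges, card_eq_sum_ones, card_eq_sum_ones, ← sum_inEdges_bar fun _ => 1]

theorem sum_sum_inEdges [Fintype G.V] {M : Type*} [AddCommMonoid M] (u : G.E → M) :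
    ∑ x, ∑ e ∈ G.inEdges x, u e = ∑ e, u e :=
  sum_fiberwise univ G.head u

theorem sum_deg [Fintype G.V] : ∑ x, G.deg x = Fintype.card G.E := by
  simp_rw [← card_inEdges, card_eq_sum_ones, sum_sum_inEdges, ← card_eq_sum_ones, card_univ]

theorem filter_step_eq_erase_outEdges (e : G.E) :
    univ.filter (G.Step e) = (G.outEdges (G.head e)).erase (G.bar e) := by
  ext f
  simp [Step, and_comm]

theorem filter_step_eq_erase_inEdges (f : G.E) :
    univ.filter (G.Step · f) = (G.inEdges (G.tail f)).erase (G.bar f) := by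
  ext e
  simp [Step, eq_bar_comm, and_comm, eq_comm]

variable (G) in
noncomputable def nbMatrix : Matrix G.E G.E ℝ := Matrix.of G.q

theorem nbMatrix_mulVec_apply (u : G.E → ℝ) (e : G.E) :
    (G.nbMatrix *ᵥ u) e =
      (∑ f ∈ G.outEdges (G.head e), u f - u (G.bar e)) / (G.deg (G.head e) - 1) := by
  have hbar : G.bar e ∈ G.outEdges (G.head e) := by simp [tail_bar]
  simp only [Matrix.mulVec, dotProduct, nbMatrix, Matrix.of_apply, q, ite_mul, zero_mul]
  rw [← sum_filter, filter_step_eq_erase_outEdges, ← mul_sum, sum_erase_eq_sub hbar,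
    one_div_mul_eq_div]

theorem vecMul_nbMatrix_apply (u : G.E → ℝ) (f : G.E) :
    (u ᵥ* G.nbMatrix) f =
      (∑ e ∈ G.inEdges (G.tail f), u e - u (G.bar f)) / (G.deg (G.tail f) - 1) := by
  have hbar : G.bar f ∈ G.inEdges (G.tail f) := by simp [head_bar]
  have hdeg : ∀ e ∈ univ.filter (G.Step · f),
      u e * (1 / ((G.deg (G.head e) : ℝ) - 1)) = u e * (1 / ((G.deg (G.tail f) : ℝ) - 1)) :=
    fun e he => by rw [(mem_filter.1 he).2.1]
  simp only [Matrix.vecMul, dotProduct, nbMatrix, Matrix.of_apply, q, mul_ite, mul_zero]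
  rw [← sum_filter, sum_congr rfl hdeg, ← sum_mul, filter_step_eq_erase_inEdges,
    sum_erase_eq_sub hbar, mul_one_div]

theorem nbMatrix_mem_doublyStochastic (hdeg : ∀ x, 2 ≤ G.deg x) :
    G.nbMatrix ∈ doublyStochastic ℝ G.E := by
  refine mem_doublyStochastic.2 ⟨fun e f => ?_, funext fun e => ?_, funext fun f => ?_⟩
  · have := deg_sub_one_pos hdeg (G.head e)
    simp only [nbMatrix, Matrix.of_apply, q]
    split_ifs <;> positivity
  · simp [nbMatrix_mulVec_apply, card_outEdges, (deg_sub_one_pos hdeg _).ne']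
  · simp [vecMul_nbMatrix_apply, card_inEdges, (deg_sub_one_pos hdeg _).ne']

theorem qn_eq_pow (n : ℕ) (e f : G.E) : G.qn n e f = (G.nbMatrix ^ n) e f := by
  induction n generalizing f with
  | zero => rw [qn, pow_zero, Matrix.one_apply]
  | succ n ih =>
    rw [qn, tsum_fintype, pow_succ, Matrix.mul_apply]
    simp only [ih]
    rfl

variable (G) in
noncomputable def inIndicator (x : G.V) : EuclideanSpace ℝ G.E :=
  WithLp.toLp 2 fun e => if G.head e = x then 1 else 0

theorem inner_inIndicator (x : G.V) (w : EuclideanSpace ℝ G.E) :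
    ⟪G.inIndicator x, w⟫ = ∑ e ∈ G.inEdges x, w e := by
  simp [inIndicator, PiLp.inner_apply, inEdges, sum_filter]

theorem sum_subtype_head_eq (x : G.V) (φ : G.E → ℝ) :
    ∑ e : {e // G.head e = x}, φ e = ∑ e ∈ G.inEdges x, φ e :=
  (sum_subtype _ (fun _ => mem_inEdges) φ).symm

variable (G) in
noncomputable def nbOperator : EuclideanSpace ℝ G.E →L[ℝ] EuclideanSpace ℝ G.E :=
  Matrix.toEuclideanCLM (𝕜 := ℝ) G.nbMatrix

theorem qv_eq_inner (k : ℕ) (x y : G.V) :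
    G.qv k x y = (G.deg x : ℝ)⁻¹ * ⟪G.inIndicator x, (G.nbOperator ^ k) (G.inIndicator y)⟫ := by
  rw [qv, one_div, nbOperator, ← map_pow, inner_inIndicator, tsum_fintype,
    sum_subtype_head_eq x fun e => ∑' f : {f // G.head f = y}, G.qn k e f]
  congr 1
  refine sum_congr rfl fun e _ => ?_
  rw [tsum_fintype, sum_subtype_head_eq y (G.qn k e)]
  simp only [Matrix.ofLp_toEuclideanCLM, inIndicator, Matrix.mulVec, dotProduct, mul_boole,
    inEdges, sum_filter, qn_eq_pow]

theorem nbOperator_norm_le_one (hdeg : ∀ x, 2 ≤ G.deg x) : ‖G.nbOperator‖ ≤ 1 :=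
  Matrix.l2_opNorm_le_one_of_mem_doublyStochastic (nbMatrix_mem_doublyStochastic hdeg)

section FixedVector

variable {u : G.E → ℝ} (hdeg : ∀ x, 2 ≤ G.deg x)
include hdeg

theorem sum_inEdges_eq_sum_outEdges (hrow : G.nbMatrix *ᵥ u = u) (x : G.V) :
    ∑ e ∈ G.inEdges x, u e = ∑ e ∈ G.outEdges x, u e := by
  have hd := (deg_sub_one_pos hdeg x).ne'
  have hrow_at : ∀ e ∈ G.inEdges x,
      ((G.deg x : ℝ) - 1) * u e = ∑ f ∈ G.outEdges x, u f - u (G.bar e) := by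
    intro e he
    obtain rfl := mem_inEdges.1 he
    rw [← congrFun hrow e, nbMatrix_mulVec_apply, mul_div_cancel₀ _ hd]
  have := sum_congr rfl hrow_at
  rw [← mul_sum, sum_sub_distrib, sum_inEdges_bar, sum_const, card_inEdges, nsmul_eq_mul] at this
  exact mul_left_cancel₀ hd (by linear_combination this)

theorem sum_inEdges_head_div_deg (hrow : G.nbMatrix *ᵥ u = u) (hcol : u ᵥ* G.nbMatrix = u)
    (e : G.E) :
    (∑ f ∈ G.inEdges (G.head e), u f) / G.deg (G.head e) = (u e + u (G.bar e)) / 2 := by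
  have hd := (deg_sub_one_pos hdeg (G.head e)).ne'
  have hrow_e : ((G.deg (G.head e) : ℝ) - 1) * u e =
      ∑ f ∈ G.inEdges (G.head e), u f - u (G.bar e) := by
    rw [sum_inEdges_eq_sum_outEdges hdeg hrow, ← congrFun hrow e, nbMatrix_mulVec_apply,
      mul_div_cancel₀ _ hd]
  have hcol_bar : ((G.deg (G.head e) : ℝ) - 1) * u (G.bar e) =
      ∑ f ∈ G.inEdges (G.head e), u f - u e := by
    rw [← congrFun hcol (G.bar e), vecMul_nbMatrix_apply, tail_bar, G.bar_bar,
      mul_div_cancel₀ _ hd]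
  rw [div_eq_div_iff (deg_ne_zero hdeg _) two_ne_zero]
  linear_combination -(hrow_e + hcol_bar)

theorem sum_inEdges_mul_card [Fintype G.V] (hconn : G.Connected)
    (hrow : G.nbMatrix *ᵥ u = u) (hcol : u ᵥ* G.nbMatrix = u) (x : G.V) :
    (∑ e ∈ G.inEdges x, u e) * Fintype.card G.E = G.deg x * ∑ e, u e := by
  obtain ⟨c, hc⟩ : ∃ c : ℝ, ∀ z, ∑ e ∈ G.inEdges z, u e = c * G.deg z := by
    refine ⟨(∑ e ∈ G.inEdges x, u e) / G.deg x, fun z => ?_⟩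
    have hconst := hconn.eq_of_adj (φ := fun z => (∑ e ∈ G.inEdges z, u e) / G.deg z)
      (by rintro _ _ ⟨e, rfl, rfl⟩
          rw [← head_bar, sum_inEdges_head_div_deg hdeg hrow hcol,
            sum_inEdges_head_div_deg hdeg hrow hcol, G.bar_bar, add_comm]) x z
    rw [hconst, div_mul_cancel₀ _ (deg_ne_zero hdeg z)]
  rw [← sum_sum_inEdges, ← sum_deg, Nat.cast_sum]
  simp_rw [hc, ← mul_sum]
  ring

end FixedVector

theorem vecMul_nbMatrix_eq_self (hdeg : ∀ x, 2 ≤ G.deg x) {u : EuclideanSpace ℝ G.E}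
    (hu : G.nbOperator u = u) : u ᵥ* G.nbMatrix = u := by
  have h := ContinuousLinearMap.adjoint_apply_eq_self_of_apply_eq_self (𝕜 := ℝ)
    (T := G.nbOperator) (nbOperator_norm_le_one hdeg) hu
  replace h := congrArg WithLp.ofLp h
  rwa [← ContinuousLinearMap.star_eq_adjoint, nbOperator, ← map_star, Matrix.ofLp_toEuclideanCLM,
    Matrix.star_eq_conjTranspose, Matrix.conjTranspose_eq_transpose_of_trivial,
    Matrix.mulVec_transpose] at h

theorem inner_inIndicator_starProjection [Fintype G.V] (hconn : G.Connected)
    (hdeg : ∀ x, 2 ≤ G.deg x) (x y : G.V) :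
    ⟪G.inIndicator x,
        (G.nbOperator.eqLocus (1 : EuclideanSpace ℝ G.E →L[ℝ] EuclideanSpace ℝ G.E)).starProjection
          (G.inIndicator y)⟫ = G.deg x * G.deg y / Fintype.card G.E := by
  set K := G.nbOperator.eqLocus (1 : EuclideanSpace ℝ G.E →L[ℝ] EuclideanSpace ℝ G.E)
  set u := K.starProjection (G.inIndicator y)
  have hu : G.nbOperator u = u := LinearMap.mem_eqLocus.mp (K.starProjection_apply_mem _)
  have hrow : G.nbMatrix *ᵥ u = u := congrArg WithLp.ofLp hu
  have hcol : u ᵥ* G.nbMatrix = u := vecMul_nbMatrix_eq_self hdeg hu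
  have hone : WithLp.toLp 2 (1 : G.E → ℝ) ∈ K :=
    LinearMap.mem_eqLocus.mpr <| congrArg (WithLp.toLp 2) <|
      mulVec_one_of_mem_doublyStochastic (nbMatrix_mem_doublyStochastic hdeg)
  have hsum : ∑ e, u e = G.deg y :=
    calc ∑ e, u e = ⟪WithLp.toLp 2 (1 : G.E → ℝ), u⟫ := by simp [PiLp.inner_apply]
      _ = ⟪G.inIndicator y, WithLp.toLp 2 (1 : G.E → ℝ)⟫ := by
        rw [← K.inner_starProjection_left_eq_right, K.starProjection_eq_self_iff.mpr hone,
          real_inner_comm]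
      _ = G.deg y := by simp [inner_inIndicator, card_inEdges]
  have hcard : (Fintype.card G.E : ℝ) ≠ 0 :=
    Nat.cast_ne_zero.2 (lt_of_lt_of_le (by linarith [hdeg x]) (card_inEdges x ▸ card_le_univ _)).ne'
  rw [inner_inIndicator, eq_div_iff hcard, sum_inEdges_mul_card hdeg hconn hrow hcol, hsum]

end Finite

end Multigraph

open Multigraph in
/-- Cesàro convergence of vertex NBRW transition probabilities for a
finite connected multigraph with minimum degree 2:
`(1/n) ∑_{k=1}^n q^(k)(x,y) → deg(y)/|E(X)|`. -/
theorem nbrw_cesaro_limit (G : Multigraph) [Fintype G.V] [Fintype G.E]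
    (hconn : G.Connected) (hdeg : ∀ x, 2 ≤ G.deg x) :
    ∀ x y : G.V,
      Filter.Tendsto
        (fun n : ℕ => (1 / (n : ℝ)) * ∑ k ∈ Finset.Icc 1 n, G.qv k x y)
        Filter.atTop (nhds ((G.deg y : ℝ) / (Fintype.card G.E : ℝ))) := by
  intro x y
  have hlim := (((innerSL ℝ (G.inIndicator x)).continuous.tendsto _).comp
    (G.nbOperator.tendsto_cesaro_pow_starProjection (nbOperator_norm_le_one hdeg)
      (G.inIndicator y))).const_mul (G.deg x : ℝ)⁻¹
  rw [Function.comp_def] at hlim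
  simp only [innerSL_apply_apply, inner_inIndicator_starProjection hconn hdeg] at hlim
  convert hlim using 1
  · funext n
    simp only [qv_eq_inner, one_div, inner_smul_right, inner_sum, mul_sum]
    exact sum_congr rfl fun _ _ => mul_left_comm _ _ _
  · field_simp [deg_ne_zero hdeg x]
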